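/- arXiv:1507.01247 — 4 statements merged into one kernel-verified Lean document; each statement's English description precedes it below -/
import Mathlib

section
/- Let E be a finite graph and let R be a unital commutative ring of characteristic 0. If paths α₁, …, αₙ ∈ E* satisfy Σᵢ αᵢαᵢ* = 1 in L_R(E), then αᵢ*αⱼ = 0 for all i ≠ j. -/
open MulOpposite

noncomputable section

/-- A directed graph: vertices, edges, source and range maps. -/
structure LGraph where
  V : Type
  Ed : Type
  src : Ed → V
  rng : Ed → V

namespace Leavitt

/-- Generators of the Leavitt path algebra: vertices, edges and ghost edges. -/
inductive Gen (G : LGraph) : Type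
  | vert : G.V → Gen G
  | edge : G.Ed → Gen G
  | ghost : G.Ed → Gen G

/-- The star operation on generators: fixes vertices, swaps edges and ghost edges. -/
def starGen {G : LGraph} : Gen G → Gen G
  | .vert v => .vert v
  | .edge e => .ghost e
  | .ghost e => .edge e

@[simp] lemma starGen_vert {G : LGraph} (v : G.V) : starGen (.vert v : Gen G) = .vert v := rfl
@[simp] lemma starGen_edge {G : LGraph} (e : G.Ed) : starGen (.edge e : Gen G) = .ghost e := rfl
@[simp] lemma starGen_ghost {G : LGraph} (e : G.Ed) : starGen (.ghost e : Gen G) = .edge e := rfl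

/-- Words in the generators. -/
abbrev Wd (G : LGraph) : Type := FreeMonoid (Gen G)

/-- The star of a word: reverse it and star each letter. -/
def wordStar {G : LGraph} (w : Wd G) : Wd G :=
  FreeMonoid.ofList (((FreeMonoid.toList w).map starGen).reverse)

/-- A vertex is a sink if it emits no edge. -/
def IsSink (G : LGraph) (v : G.V) : Prop := ∀ e : G.Ed, G.src e ≠ v

/-- The free `R`-algebra on the generators, realized as a monoid algebra on words. -/
abbrev MA (R : Type) [CommRing R] (G : LGraph) : Type := MonoidAlgebra R (Wd G)

/-- The generator `g` as an element of the free algebra. -/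
def gn (R : Type) [CommRing R] {G : LGraph} (g : Gen G) : MA R G :=
  MonoidAlgebra.single (FreeMonoid.of g) (1 : R)

/-- The defining relations of the Leavitt path algebra `L_R(E)`. -/
inductive LRel (R : Type) [CommRing R] (G : LGraph) : MA R G → MA R G → Prop
  | vert_vert {v w : G.V} (h : v ≠ w) : LRel R G (gn R (.vert v) * gn R (.vert w)) 0
  | vert_idem (v : G.V) : LRel R G (gn R (.vert v) * gn R (.vert v)) (gn R (.vert v))
  | ghost_edge {e f : G.Ed} (h : e ≠ f) : LRel R G (gn R (.ghost e) * gn R (.edge f)) 0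
  | ghost_edge_self (e : G.Ed) :
      LRel R G (gn R (.ghost e) * gn R (.edge e)) (gn R (.vert (G.rng e)))
  | src_mul_edge (e : G.Ed) :
      LRel R G (gn R (.vert (G.src e)) * gn R (.edge e)) (gn R (.edge e))
  | edge_mul_rng (e : G.Ed) :
      LRel R G (gn R (.edge e) * gn R (.vert (G.rng e))) (gn R (.edge e))
  | ghost_mul_src (e : G.Ed) :
      LRel R G (gn R (.ghost e) * gn R (.vert (G.src e))) (gn R (.ghost e))
  | rng_mul_ghost (e : G.Ed) :
      LRel R G (gn R (.vert (G.rng e)) * gn R (.ghost e)) (gn R (.ghost e))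
  | ck (v : G.V) (h : {e : G.Ed | G.src e = v}.Finite)
      (hne : {e : G.Ed | G.src e = v}.Nonempty) :
      LRel R G (gn R (.vert v)) (∑ e ∈ h.toFinset, gn R (.edge e) * gn R (.ghost e))
  | unit (h : (Set.univ : Set G.V).Finite) :
      LRel R G 1 (∑ v ∈ h.toFinset, gn R (.vert v))

/-- The Leavitt path algebra of the graph `G` with coefficients in `R`. -/
abbrev LPA (R : Type) [CommRing R] (G : LGraph) : Type := RingQuot (LRel R G)

/-- The quotient map onto the Leavitt path algebra. -/
def mk (R : Type) [CommRing R] (G : LGraph) : MA R G →+* LPA R G :=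
  RingQuot.mkRingHom (LRel R G)

variable (R : Type) [CommRing R] (G : LGraph)

/-- Auxiliary monoid homomorphism sending a word to the image in the opposite algebra of
its starred word. -/
def ghostMap : Wd G →* (LPA R G)ᵐᵒᵖ :=
  FreeMonoid.lift fun x => op (mk R G (gn R (starGen x)))

/-- The underlying ring homomorphism of the (conjugate-linear, with respect to `σ`)
involution, from the free algebra to the opposite of the Leavitt path algebra. -/
def starPre (σ : R →+* R) : MA R G →+* (LPA R G)ᵐᵒᵖ :=
  MonoidAlgebra.liftNCRingHom ((algebraMap R (LPA R G)ᵐᵒᵖ).comp σ) (ghostMap R G)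
    (fun x y => Algebra.commute_algebraMap_left (σ x) _)

lemma starPre_single (σ : R →+* R) (w : Wd G) (c : R) :
    starPre R G σ (MonoidAlgebra.single w c)
      = algebraMap R (LPA R G)ᵐᵒᵖ (σ c) * ghostMap R G w := by
  classical
  exact MonoidAlgebra.liftNC_single _ _ _ _

lemma starPre_gn (σ : R →+* R) (a : Gen G) :
    starPre R G σ (gn R a) = op (mk R G (gn R (starGen a))) := by
  rw [gn, starPre_single, map_one, map_one, one_mul]
  rfl

lemma starPre_gn_mul (σ : R →+* R) (a b : Gen G) :
    starPre R G σ (gn R a * gn R b)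
      = op (mk R G (gn R (starGen b) * gn R (starGen a))) := by
  rw [map_mul, starPre_gn, starPre_gn, ← op_mul, ← map_mul]

lemma starPre_rel (σ : R →+* R) :
    ∀ ⦃a b : MA R G⦄, LRel R G a b → starPre R G σ a = starPre R G σ b := by
  have key : ∀ {x y : MA R G}, LRel R G x y → mk R G x = mk R G y :=
    fun h => RingQuot.mkRingHom_rel h
  intro a b h
  cases h with
  | vert_vert h =>
      rw [starPre_gn_mul, map_zero, starGen_vert, starGen_vert,
        key (LRel.vert_vert (Ne.symm h)), map_zero, op_zero]
  | vert_idem v =>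
      rw [starPre_gn_mul, starPre_gn, starGen_vert, key (LRel.vert_idem v)]
  | ghost_edge h =>
      rw [starPre_gn_mul, map_zero, starGen_edge, starGen_ghost,
        key (LRel.ghost_edge (Ne.symm h)), map_zero, op_zero]
  | ghost_edge_self e =>
      rw [starPre_gn_mul, starPre_gn, starGen_edge, starGen_ghost, starGen_vert,
        key (LRel.ghost_edge_self e)]
  | src_mul_edge e =>
      rw [starPre_gn_mul, starPre_gn, starGen_edge, starGen_vert,
        key (LRel.ghost_mul_src e)]
  | edge_mul_rng e =>
      rw [starPre_gn_mul, starPre_gn, starGen_edge, starGen_vert,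
        key (LRel.rng_mul_ghost e)]
  | ghost_mul_src e =>
      rw [starPre_gn_mul, starPre_gn, starGen_ghost, starGen_vert,
        key (LRel.src_mul_edge e)]
  | rng_mul_ghost e =>
      rw [starPre_gn_mul, starPre_gn, starGen_ghost, starGen_vert,
        key (LRel.edge_mul_rng e)]
  | ck v hfin hne =>
      rw [starPre_gn, starGen_vert, map_sum]
      simp only [starPre_gn_mul, starGen_edge, starGen_ghost]
      rw [← Finset.op_sum, ← map_sum, key (LRel.ck v hfin hne)]
  | unit hfin =>
      rw [map_one, map_sum]
      simp only [starPre_gn, starGen_vert]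
      rw [← Finset.op_sum, ← map_sum, ← key (LRel.unit hfin), map_one, op_one]

/-- The involution `x ↦ x*` on the Leavitt path algebra, conjugate-linear with respect
to the coefficient conjugation `σ`. -/
def lstar (σ : R →+* R) : LPA R G → LPA R G :=
  fun x => unop ((RingQuot.lift ⟨starPre R G σ, starPre_rel R G σ⟩) x)

/-- `chainOK G v l` : the list of edges `l` is a path starting at the vertex `v`. -/
def chainOK (G : LGraph) : G.V → List G.Ed → Prop
  | _, [] => True
  | v, e :: l => G.src e = v ∧ chainOK G (G.rng e) l

/-- The end vertex of a list of edges starting at `v`. -/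
def pathEnd (G : LGraph) : G.V → List G.Ed → G.V
  | v, [] => v
  | _, e :: l => pathEnd G (G.rng e) l

/-- A finite path in `G`: a starting vertex together with a compatible (possibly empty)
list of edges.  Vertices are the paths of length `0`. -/
structure GPath (G : LGraph) where
  first : G.V
  edges : List G.Ed
  ok : chainOK G first edges

/-- The range (end vertex) of a path. -/
def GPath.last {G : LGraph} (p : GPath G) : G.V := pathEnd G p.first p.edges

/-- The length of a path. -/
def GPath.length {G : LGraph} (p : GPath G) : ℕ := p.edges.length

/-- The word in the generators associated to a path. -/
def GPath.word {G : LGraph} (p : GPath G) : Wd G :=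
  FreeMonoid.ofList (Gen.vert p.first :: p.edges.map Gen.edge)

/-- The element `α` of `L_R(E)` associated to a path `α`. -/
def pathElem {G : LGraph} (p : GPath G) : LPA R G :=
  mk R G (MonoidAlgebra.single p.word (1 : R))

/-- The element `α*` of `L_R(E)` associated to a path `α`. -/
def pathElemStar {G : LGraph} (p : GPath G) : LPA R G :=
  mk R G (MonoidAlgebra.single (wordStar p.word) (1 : R))

/-- The diagonal subalgebra: the `R`-linear span of the `αα*` for finite paths `α`. -/
def diagonal : Submodule R (LPA R G) :=
  Submodule.span R (Set.range fun p : GPath G => pathElem R p * pathElemStar R p)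

/-- The image of a vertex in the Leavitt path algebra. -/
def vertexElem (v : G.V) : LPA R G := mk R G (gn R (.vert v))

/-- The image of an edge in the Leavitt path algebra. -/
def edgeElem (e : G.Ed) : LPA R G := mk R G (gn R (.edge e))

/-- The image of a ghost edge (`e*`) in the Leavitt path algebra. -/
def ghostElem (e : G.Ed) : LPA R G := mk R G (gn R (.ghost e))

/-- A projection: a self-adjoint idempotent. -/
def IsProjection (σ : R →+* R) (p : LPA R G) : Prop :=
  p * p = p ∧ lstar R G σ p = p

/-- A unitary element. -/
def IsUnitary (σ : R →+* R) (u : LPA R G) : Prop :=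
  lstar R G σ u * u = 1 ∧ u * lstar R G σ u = 1

/-- The adjacency matrix of a graph. -/
noncomputable def adjMatrix (G : LGraph) : Matrix G.V G.V ℤ :=
  Matrix.of fun v w => (Nat.card {e : G.Ed // G.src e = v ∧ G.rng e = w} : ℤ)

/-- A graph is strongly connected if there is a path between any two vertices. -/
def StronglyConnected (G : LGraph) : Prop :=
  ∀ u w : G.V, ∃ p : GPath G, p.first = u ∧ p.last = w

/-- A graph is essential if it has no sinks and no sources. -/
def Essential (G : LGraph) : Prop :=
  (∀ v : G.V, ∃ e : G.Ed, G.src e = v) ∧ (∀ v : G.V, ∃ e : G.Ed, G.rng e = v)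

/-- Condition (L): every cycle has an exit. -/
def ConditionL (G : LGraph) : Prop :=
  ∀ p : GPath G, p.edges ≠ [] → p.last = p.first →
    ∃ (i : Fin p.edges.length) (f : G.Ed),
      G.src f = G.src (p.edges.get i) ∧ f ≠ p.edges.get i

/-- Complex conjugation on a subring of `ℂ` closed under conjugation. -/
def conjHom (R : Subring ℂ) (hR : ∀ z ∈ R, (starRingEnd ℂ) z ∈ R) : ↥R →+* ↥R where
  toFun z := ⟨(starRingEnd ℂ) (z : ℂ), hR (z : ℂ) z.2⟩
  map_one' := by ext; simp
  map_mul' x y := by ext; simp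
  map_zero' := by ext; simp
  map_add' x y := by ext; simp

/-- A subring of `ℂ` has an essentially unique partition of the unit if whenever
`∑ λᵢ λ̄ᵢ = 1` with all `λᵢ` in the subring, all but one of the `λᵢ` vanish. -/
def HasEUP (R : Subring ℂ) : Prop :=
  ∀ (n : ℕ) (lam : Fin n → ↥R),
    (∑ i, (lam i : ℂ) * (starRingEnd ℂ) (lam i : ℂ)) = 1 →
      ∃ j : Fin n, ∀ i : Fin n, i ≠ j → lam i = 0

/-- The graph `E₂`: one vertex and two loops (`false` ↦ `a`, `true` ↦ `b`). -/
def E2 : LGraph := ⟨PUnit, Bool, fun _ => PUnit.unit, fun _ => PUnit.unit⟩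

/-- The graph `E₂₋`, the Cuntz splice of `E₂`.  Vertices: `0 = u`, `1 = v₁`, `2 = v₂`.
Edges: `0,1 = f₁,f₂` (loops at `u`), `2 = d₁ : u → v₁`, `3 = d₂ : v₁ → u`,
`4 = e₁` (loop at `v₁`), `5 = e₂ : v₁ → v₂`, `6 = e₃ : v₂ → v₁`, `7 = e₄` (loop at `v₂`). -/
def E2m : LGraph := ⟨Fin 3, Fin 8, ![0, 0, 0, 1, 1, 1, 2, 2], ![0, 0, 1, 0, 1, 2, 1, 2]⟩

end Leavitt

end


/-! The Leavitt path algebra acts on the free `R`-module on boundary paths (infinite paths and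
finite paths ending at a sink): a vertex projects onto the paths starting at it, an edge is
prepended, a ghost edge removes a leading copy of itself. Under this action `αα*` is the
projection onto the boundary paths extending `α`.

If `α` and `β` are incomparable (different sources, or neither edge list a prefix of the other),
then `α*β = 0` already by the relations. Otherwise some boundary path `x` extends both, and
evaluating `∑ αₖαₖ* = 1` at `x` gives `#{k | x extends αₖ} = 1` in `R`; in characteristic `0`
this forces the count to be `1`, so at most one `αₖ` lies below `x`. -/

namespace Leavitt

section Relations

variable {R : Type} [CommRing R] {G : LGraph}

theorem vertexElem_mul_vertexElem_of_ne {v w : G.V} (h : v ≠ w) :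
    vertexElem R G v * vertexElem R G w = 0 :=
  (map_mul (mk R G) _ _).symm.trans
    ((RingQuot.mkRingHom_rel (LRel.vert_vert h)).trans (map_zero _))

theorem vertexElem_mul_self (v : G.V) :
    vertexElem R G v * vertexElem R G v = vertexElem R G v :=
  (map_mul (mk R G) _ _).symm.trans (RingQuot.mkRingHom_rel (LRel.vert_idem v))

theorem ghostElem_mul_edgeElem_of_ne {e f : G.Ed} (h : e ≠ f) :
    ghostElem R G e * edgeElem R G f = 0 :=
  (map_mul (mk R G) _ _).symm.trans
    ((RingQuot.mkRingHom_rel (LRel.ghost_edge h)).trans (map_zero _))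

theorem ghostElem_mul_edgeElem_self (e : G.Ed) :
    ghostElem R G e * edgeElem R G e = vertexElem R G (G.rng e) :=
  (map_mul (mk R G) _ _).symm.trans (RingQuot.mkRingHom_rel (LRel.ghost_edge_self e))

theorem ghostElem_mul_vertexElem_src (e : G.Ed) :
    ghostElem R G e * vertexElem R G (G.src e) = ghostElem R G e :=
  (map_mul (mk R G) _ _).symm.trans (RingQuot.mkRingHom_rel (LRel.ghost_mul_src e))

variable (R) in
noncomputable def edgeProd (l : List G.Ed) : LPA R G := (l.map (edgeElem R G)).prod

variable (R) in
noncomputable def ghostProd (l : List G.Ed) : LPA R G := (l.map (ghostElem R G)).reverse.prod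

@[simp] theorem edgeProd_nil : edgeProd R ([] : List G.Ed) = 1 := rfl

@[simp] theorem ghostProd_nil : ghostProd R ([] : List G.Ed) = 1 := rfl

theorem edgeProd_cons (e : G.Ed) (l : List G.Ed) :
    edgeProd R (e :: l) = edgeElem R G e * edgeProd R l := by
  simp [edgeProd]

theorem ghostProd_cons (e : G.Ed) (l : List G.Ed) :
    ghostProd R (e :: l) = ghostProd R l * ghostElem R G e := by
  simp [ghostProd]

theorem mk_single_ofList (L : List (Gen G)) :
    mk R G (MonoidAlgebra.single (FreeMonoid.ofList L) 1)
      = (L.map fun g => mk R G (gn R g)).prod := by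
  have : (mk R G : MA R G →* LPA R G).comp (MonoidAlgebra.of R (Wd G))
      = FreeMonoid.lift fun g => mk R G (gn R g) := FreeMonoid.hom_eq fun _ => rfl
  exact (DFunLike.congr_fun this (FreeMonoid.ofList L)).trans (FreeMonoid.lift_ofList _ _)

theorem pathElem_eq (p : GPath G) :
    pathElem R p = vertexElem R G p.first * edgeProd R p.edges := by
  simp only [pathElem, GPath.word, mk_single_ofList, List.map_cons, List.prod_cons, List.map_map]
  rfl

theorem pathElemStar_eq (p : GPath G) :
    pathElemStar R p = ghostProd R p.edges * vertexElem R G p.first := by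
  simp only [pathElemStar, GPath.word, wordStar, FreeMonoid.toList_ofList, List.map_cons,
    List.reverse_cons, mk_single_ofList, List.map_append, List.prod_append, List.map_reverse,
    List.map_map, List.map_nil, List.prod_cons, List.prod_nil, mul_one]
  rfl

theorem ghostProd_mul_vertexElem_mul_edgeProd_eq_zero {l₁ l₂ : List G.Ed} {v : G.V}
    (h₁ : chainOK G v l₁) (h₂ : chainOK G v l₂) (h₁₂ : ¬ l₁ <+: l₂) (h₂₁ : ¬ l₂ <+: l₁) :
    ghostProd R l₁ * vertexElem R G v * edgeProd R l₂ = 0 := by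
  induction l₁ generalizing v l₂ with
  | nil => exact absurd List.nil_prefix h₁₂
  | cons e l₁ ih =>
    cases l₂ with
    | nil => exact absurd List.nil_prefix h₂₁
    | cons f l₂ =>
      obtain ⟨rfl, h₁⟩ := h₁
      obtain ⟨-, h₂⟩ := h₂
      rw [ghostProd_cons, edgeProd_cons, mul_assoc (ghostProd R l₁), ghostElem_mul_vertexElem_src,
        mul_assoc, ← mul_assoc (ghostElem R G e)]
      by_cases hef : e = f
      · subst hef
        rw [ghostElem_mul_edgeElem_self, ← mul_assoc]
        exact ih h₁ h₂ (fun h => h₁₂ (List.cons_prefix_cons.mpr ⟨rfl, h⟩))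
          (fun h => h₂₁ (List.cons_prefix_cons.mpr ⟨rfl, h⟩))
      · rw [ghostElem_mul_edgeElem_of_ne hef, zero_mul, mul_zero]

theorem pathElemStar_mul_pathElem_eq_zero {p q : GPath G}
    (h : p.first ≠ q.first ∨ ¬ p.edges <+: q.edges ∧ ¬ q.edges <+: p.edges) :
    pathElemStar R p * pathElem R q = 0 := by
  rw [pathElemStar_eq, pathElem_eq, mul_assoc, ← mul_assoc (vertexElem R G p.first)]
  rcases ne_or_eq p.first q.first with hne | hpq
  · rw [vertexElem_mul_vertexElem_of_ne hne, zero_mul, mul_zero]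
  · obtain ⟨h₁₂, h₂₁⟩ := h.resolve_left (not_not.mpr hpq)
    rw [hpq, vertexElem_mul_self, ← mul_assoc]
    exact ghostProd_mul_vertexElem_mul_edgeProd_eq_zero (hpq ▸ p.ok) q.ok h₁₂ h₂₁

end Relations

/-- An infinite path, or a finite path ending at a sink followed by `none`s (the data after the
first `none` is irrelevant). -/
@[ext] structure BoundaryPath (G : LGraph) where
  vertex : ℕ → G.V
  edge : ℕ → Option G.Ed
  src_eq_of_edge_eq_some : ∀ n e, edge n = some e → G.src e = vertex n
  vertex_succ_of_edge_eq_some : ∀ n e, edge n = some e → vertex (n + 1) = G.rng e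
  isSink_of_edge_eq_none : ∀ n, edge n = none → IsSink G (vertex n)

namespace BoundaryPath

variable {G : LGraph}

def tail (x : BoundaryPath G) : BoundaryPath G where
  vertex n := x.vertex (n + 1)
  edge n := x.edge (n + 1)
  src_eq_of_edge_eq_some n := x.src_eq_of_edge_eq_some (n + 1)
  vertex_succ_of_edge_eq_some n := x.vertex_succ_of_edge_eq_some (n + 1)
  isSink_of_edge_eq_none n := x.isSink_of_edge_eq_none (n + 1)

@[simp] theorem tail_vertex (x : BoundaryPath G) (n : ℕ) : x.tail.vertex n = x.vertex (n + 1) :=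
  rfl

def cons (x : BoundaryPath G) (e : G.Ed) (h : G.rng e = x.vertex 0) : BoundaryPath G where
  vertex
    | 0 => G.src e
    | n + 1 => x.vertex n
  edge
    | 0 => some e
    | n + 1 => x.edge n
  src_eq_of_edge_eq_some
    | 0, _, hf => by cases hf; rfl
    | n + 1, f, hf => x.src_eq_of_edge_eq_some n f hf
  vertex_succ_of_edge_eq_some
    | 0, _, hf => by cases hf; exact h.symm
    | n + 1, f, hf => x.vertex_succ_of_edge_eq_some n f hf
  isSink_of_edge_eq_none
    | n + 1, hn => x.isSink_of_edge_eq_none n hn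

@[simp] theorem cons_vertex_zero (x : BoundaryPath G) (e : G.Ed) (h) :
    (x.cons e h).vertex 0 = G.src e := rfl

@[simp] theorem cons_edge_zero (x : BoundaryPath G) (e : G.Ed) (h) :
    (x.cons e h).edge 0 = some e := rfl

@[simp] theorem tail_cons (x : BoundaryPath G) (e : G.Ed) (h) : (x.cons e h).tail = x := rfl

theorem rng_eq_tail_vertex_zero {x : BoundaryPath G} {e : G.Ed} (he : x.edge 0 = some e) :
    G.rng e = x.tail.vertex 0 :=
  (x.vertex_succ_of_edge_eq_some 0 e he).symm

theorem tail_cons_of_edge_zero {x : BoundaryPath G} {e : G.Ed} (he : x.edge 0 = some e) :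
    x.tail.cons e (rng_eq_tail_vertex_zero he) = x := by
  refine BoundaryPath.ext (funext fun n => ?_) (funext fun n => ?_) <;> cases n
  · exact x.src_eq_of_edge_eq_some 0 e he
  · rfl
  · exact he.symm
  · rfl

/-- The path from `w` that follows an arbitrarily chosen edge out of every vertex that is not a
sink. -/
noncomputable def greedy (w : G.V) : BoundaryPath G :=
  let out (v : G.V) : Option {e : G.Ed // G.src e = v} := Option.choice _
  let step (v : G.V) : G.V := (out v).elim v fun e => G.rng e
  { vertex n := step^[n] w
    edge n := (out (step^[n] w)).map Subtype.val
    src_eq_of_edge_eq_some n e he := by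
      obtain ⟨e', -, rfl⟩ := Option.map_eq_some_iff.mp he
      exact e'.2
    vertex_succ_of_edge_eq_some n e he := by
      obtain ⟨e', he', rfl⟩ := Option.map_eq_some_iff.mp he
      simp only [Function.iterate_succ_apply', step, he', Option.elim_some]
    isSink_of_edge_eq_none n hn e he :=
      Option.choice_eq_none_iff_not_nonempty.mp (Option.map_eq_none_iff.mp hn) ⟨⟨e, he⟩⟩ }

def StartsWith : BoundaryPath G → List G.Ed → Prop
  | _, [] => True
  | x, e :: l => x.edge 0 = some e ∧ x.tail.StartsWith l

theorem StartsWith.of_prefix {x : BoundaryPath G} {l₁ l₂ : List G.Ed} (h : l₁ <+: l₂)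
    (hx : x.StartsWith l₂) : x.StartsWith l₁ := by
  obtain ⟨t, rfl⟩ := h
  induction l₁ generalizing x with
  | nil => trivial
  | cons e l ih => exact ⟨hx.1, ih hx.2⟩

theorem exists_startsWith {v : G.V} {l : List G.Ed} (h : chainOK G v l) :
    ∃ x : BoundaryPath G, x.vertex 0 = v ∧ x.StartsWith l := by
  induction l generalizing v with
  | nil => exact ⟨greedy v, rfl, trivial⟩
  | cons e l ih =>
    obtain ⟨y, hy, hyl⟩ := ih h.2
    exact ⟨y.cons e hy.symm, h.1, rfl, hyl⟩

def Extends (x : BoundaryPath G) (p : GPath G) : Prop :=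
  x.vertex 0 = p.first ∧ x.StartsWith p.edges

theorem exists_extends_of_prefix {p q : GPath G} (hfirst : p.first = q.first)
    (hpre : p.edges <+: q.edges) : ∃ x : BoundaryPath G, x.Extends p ∧ x.Extends q := by
  obtain ⟨x, hx, hxq⟩ := exists_startsWith q.ok
  exact ⟨x, ⟨hx.trans hfirst.symm, hxq.of_prefix hpre⟩, hx, hxq⟩

end BoundaryPath

section Representation

open BoundaryPath
open scoped Classical

variable (R : Type) [CommRing R] {G : LGraph}

noncomputable def genOp : Gen G → Module.End R (BoundaryPath G →₀ R)
  | .vert v => Finsupp.lsum R fun x => if x.vertex 0 = v then Finsupp.lsingle x else 0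
  | .edge e => Finsupp.lsum R fun x =>
      if h : G.rng e = x.vertex 0 then Finsupp.lsingle (x.cons e h) else 0
  | .ghost e => Finsupp.lsum R fun x =>
      if x.edge 0 = some e then Finsupp.lsingle x.tail else 0

variable {R}

@[simp] theorem genOp_vert_single (v : G.V) (x : BoundaryPath G) (r : R) :
    genOp R (.vert v) (Finsupp.single x r)
      = if x.vertex 0 = v then Finsupp.single x r else 0 := by
  rw [genOp, Finsupp.lsum_single]
  split_ifs <;> rfl

@[simp] theorem genOp_edge_single (e : G.Ed) (x : BoundaryPath G) (r : R) :
    genOp R (.edge e) (Finsupp.single x r)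
      = if h : G.rng e = x.vertex 0 then Finsupp.single (x.cons e h) r else 0 := by
  rw [genOp, Finsupp.lsum_single]
  split_ifs <;> rfl

@[simp] theorem genOp_ghost_single (e : G.Ed) (x : BoundaryPath G) (r : R) :
    genOp R (.ghost e) (Finsupp.single x r)
      = if x.edge 0 = some e then Finsupp.single x.tail r else 0 := by
  rw [genOp, Finsupp.lsum_single]
  split_ifs <;> rfl

theorem genOp_edge_genOp_ghost_single (e : G.Ed) (x : BoundaryPath G) (r : R) :
    genOp R (.edge e) (genOp R (.ghost e) (Finsupp.single x r))
      = if x.edge 0 = some e then Finsupp.single x r else 0 := by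
  rw [genOp_ghost_single]
  split_ifs with hx
  · rw [genOp_edge_single, dif_pos (rng_eq_tail_vertex_zero hx), tail_cons_of_edge_zero hx]
  · exact map_zero _

variable (R G) in
noncomputable def freeBoundaryRep : MA R G →ₐ[R] Module.End R (BoundaryPath G →₀ R) :=
  MonoidAlgebra.lift R _ (Wd G) (FreeMonoid.lift (genOp R))

@[simp] theorem freeBoundaryRep_gn (g : Gen G) : freeBoundaryRep R G (gn R g) = genOp R g := by
  rw [gn, freeBoundaryRep, MonoidAlgebra.lift_single, one_smul]
  rfl

theorem freeBoundaryRep_rel ⦃a b : MA R G⦄ (h : LRel R G a b) :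
    freeBoundaryRep R G a = freeBoundaryRep R G b := by
  cases h with
  | ck v hfin hne =>
    -- a boundary path at the non-sink `v` begins with exactly one edge, and that edge leaves `v`
    refine Finsupp.lhom_ext fun x r => ?_
    simp only [map_sum, map_mul, freeBoundaryRep_gn, LinearMap.sum_apply,
      Module.End.mul_apply, genOp_edge_genOp_ghost_single, genOp_vert_single]
    cases hx : x.edge 0 with
    | none =>
      obtain ⟨e, he⟩ := hne
      have hxv : x.vertex 0 ≠ v := fun h => x.isSink_of_edge_eq_none 0 hx e (he.trans h.symm)
      simp [hxv]
    | some f =>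
      have hf : f ∈ hfin.toFinset ↔ x.vertex 0 = v := by
        rw [Set.Finite.mem_toFinset, Set.mem_ofPred, x.src_eq_of_edge_eq_some 0 f hx]
      simp [hf]
  | unit hfin =>
    refine Finsupp.lhom_ext fun x r => ?_
    simp
  | _ =>
    refine Finsupp.lhom_ext fun x r => ?_
    simp only [map_mul, map_zero, freeBoundaryRep_gn, Module.End.mul_apply, genOp_vert_single,
      genOp_edge_single, genOp_ghost_single]
    split_ifs <;> simp_all [Ne.symm, x.src_eq_of_edge_eq_some 0, x.vertex_succ_of_edge_eq_some 0]

variable (R G) in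
noncomputable def boundaryRep : LPA R G →ₐ[R] Module.End R (BoundaryPath G →₀ R) :=
  RingQuot.liftAlgHom R ⟨freeBoundaryRep R G, freeBoundaryRep_rel⟩

theorem boundaryRep_mk (a : MA R G) : boundaryRep R G (mk R G a) = freeBoundaryRep R G a := by
  rw [mk, ← RingQuot.mkAlgHom_coe R, AlgHom.coe_toRingHom, boundaryRep,
    RingQuot.liftAlgHom_mkAlgHom_apply]

@[simp] theorem boundaryRep_vertexElem (v : G.V) :
    boundaryRep R G (vertexElem R G v) = genOp R (.vert v) := by
  rw [vertexElem, boundaryRep_mk, freeBoundaryRep_gn]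

@[simp] theorem boundaryRep_edgeElem (e : G.Ed) :
    boundaryRep R G (edgeElem R G e) = genOp R (.edge e) := by
  rw [edgeElem, boundaryRep_mk, freeBoundaryRep_gn]

@[simp] theorem boundaryRep_ghostElem (e : G.Ed) :
    boundaryRep R G (ghostElem R G e) = genOp R (.ghost e) := by
  rw [ghostElem, boundaryRep_mk, freeBoundaryRep_gn]

theorem boundaryRep_edgeProd_mul_ghostProd_single (l : List G.Ed) (x : BoundaryPath G) (r : R) :
    boundaryRep R G (edgeProd R l * ghostProd R l) (Finsupp.single x r)
      = if x.StartsWith l then Finsupp.single x r else 0 := by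
  induction l generalizing x with
  | nil => simp [StartsWith]
  | cons e l ih =>
    have hsplit : edgeProd R (e :: l) * ghostProd R (e :: l)
        = edgeElem R G e * (edgeProd R l * ghostProd R l) * ghostElem R G e := by
      simp only [edgeProd_cons, ghostProd_cons, mul_assoc]
    rw [hsplit, map_mul, map_mul, Module.End.mul_apply, Module.End.mul_apply,
      boundaryRep_ghostElem, genOp_ghost_single]
    by_cases hx : x.edge 0 = some e
    · rw [if_pos hx, ih]
      by_cases hl : x.tail.StartsWith l
      · rw [if_pos hl, boundaryRep_edgeElem, genOp_edge_single,
          dif_pos (rng_eq_tail_vertex_zero hx), tail_cons_of_edge_zero hx,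
          if_pos (show x.StartsWith (e :: l) from ⟨hx, hl⟩)]
      · rw [if_neg hl, map_zero, if_neg fun h => hl h.2]
    · simp [StartsWith, hx]

theorem boundaryRep_pathElem_mul_pathElemStar_single (p : GPath G) (x : BoundaryPath G)
    (r : R) :
    boundaryRep R G (pathElem R p * pathElemStar R p) (Finsupp.single x r)
      = if x.Extends p then Finsupp.single x r else 0 := by
  have hsplit : pathElem R p * pathElemStar R p = vertexElem R G p.first
      * (edgeProd R p.edges * ghostProd R p.edges) * vertexElem R G p.first := by
    simp only [pathElem_eq, pathElemStar_eq, mul_assoc]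
  rw [hsplit, map_mul, map_mul, Module.End.mul_apply, Module.End.mul_apply,
    boundaryRep_vertexElem, genOp_vert_single]
  by_cases hx : x.vertex 0 = p.first
  · have hext : x.Extends p ↔ x.StartsWith p.edges := and_iff_right hx
    rw [if_pos hx, boundaryRep_edgeProd_mul_ghostProd_single]
    simp only [hext]
    split_ifs <;> simp [hx]
  · simp [Extends, hx]

theorem eq_of_extends_of_sum_eq_one [CharZero R] {n : ℕ} {α : Fin n → GPath G}
    (h : ∑ i, pathElem R (α i) * pathElemStar R (α i) = 1) {x : BoundaryPath G} {i j : Fin n}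
    (hi : x.Extends (α i)) (hj : x.Extends (α j)) : i = j := by
  have hcount : ((Finset.univ.filter fun k => x.Extends (α k)).card : R) = 1 := by
    have := congr_arg (fun a => boundaryRep R G a (Finsupp.single x 1) x) h
    simp only [map_sum, LinearMap.sum_apply, boundaryRep_pathElem_mul_pathElemStar_single] at this
    simpa [apply_ite (fun f : BoundaryPath G →₀ R => f x), Finset.sum_boole] using this
  have hcard : (Finset.univ.filter fun k => x.Extends (α k)).card = 1 := by
    exact_mod_cast hcount
  exact Finset.card_le_one.mp hcard.le i (by simp [hi]) j (by simp [hj])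

end Representation

end Leavitt

open Leavitt in
theorem orthogonal_of_sum_path_projections_eq_one_general
    (E : LGraph)
    (R : Type) [CommRing R] [CharZero R]
    (n : ℕ) (α : Fin n → GPath E)
    (h : (∑ i, pathElem R (α i) * pathElemStar R (α i)) = 1) :
    ∀ i j : Fin n, i ≠ j → pathElemStar R (α i) * pathElem R (α j) = 0 := by
  intro i j hij
  by_contra hne
  obtain ⟨hfirst, hpre⟩ : (α i).first = (α j).first ∧
      ((α i).edges <+: (α j).edges ∨ (α j).edges <+: (α i).edges) := by
    by_contra hcomp
    exact hne (pathElemStar_mul_pathElem_eq_zero (by tauto))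
  obtain ⟨x, hxi, hxj⟩ : ∃ x : BoundaryPath E, x.Extends (α i) ∧ x.Extends (α j) := by
    rcases hpre with hpre | hpre
    · exact BoundaryPath.exists_extends_of_prefix hfirst hpre
    · exact (BoundaryPath.exists_extends_of_prefix hfirst.symm hpre).imp fun _ => And.symm
  exact hij (eq_of_extends_of_sum_eq_one h hxi hxj)

open Leavitt in
/-- If paths `α₁, …, αₙ` in a finite graph satisfy `∑ αᵢαᵢ* = 1` in
`L_R(E)` for `R` a unital commutative ring of characteristic `0`, then `αᵢ*αⱼ = 0` for
`i ≠ j`. -/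
theorem orthogonal_of_sum_path_projections_eq_one
    (E : LGraph) [Fintype E.V] [Fintype E.Ed]
    (R : Type) [CommRing R] [CharZero R]
    (n : ℕ) (α : Fin n → GPath E)
    (h : (∑ i, pathElem R (α i) * pathElemStar R (α i)) = 1) :
    ∀ i j : Fin n, i ≠ j → pathElemStar R (α i) * pathElem R (α j) = 0 :=
  orthogonal_of_sum_path_projections_eq_one_general E R n α h
end

section
/- Let E be a graph, let R be a unital commutative subring of ℂ closed under complex conjugation that has an essentially unique partition of the unit, let x ∈ L_R(E) and λ ∈ R. If α, β ∈ E* are paths such that 2x = α + λβ in L_R(E), then α = β. -/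
open MulOpposite

/-!
Fix one edge out of each regular vertex, the special edges. The Leavitt path algebra acts on the
free `R`-module spanned by the boundary paths that eventually follow special edges, tensored with
the `ℤ`-grading: vertices act as projections, edges prepend, ghost edges delete a first edge. The
Cuntz–Krieger relation holds because every boundary path from a regular vertex begins with exactly
one edge. A path `α` sends the trivial boundary path at `r(α)`, in degree `0`, to a basis vector
from which `α` can be read off (the degree restores the collapsed special edges), so that
coordinate is an `R`-linear functional which is `1` on `α` and `0` on every other path. Applied to
`2x = α + λβ` with `α ≠ β` it gives `2c = 1` in `R`; then `c = 1/2` and four copies of `c` form a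
partition of the unit, contradicting its essential uniqueness.
-/

namespace Finsupp

variable {R X : Type*} [Semiring R]

noncomputable def partialEnd (f : X → Option X) : Module.End R (X →₀ R) :=
  linearCombination R fun x => (f x).elim 0 (single · 1)

@[simp]
theorem partialEnd_single (f : X → Option X) (x : X) (c : R) :
    partialEnd f (single x c) = (f x).elim 0 (single · c) := by
  cases h : f x <;> simp [partialEnd, h]

theorem partialEnd_some : (partialEnd Option.some : Module.End R (X →₀ R)) = 1 :=
  lhom_ext fun x c => by simp

theorem partialEnd_none : (partialEnd (fun _ => none) : Module.End R (X →₀ R)) = 0 :=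
  lhom_ext fun x c => by simp

theorem partialEnd_mul (f g : X → Option X) :
    (partialEnd f * partialEnd g : Module.End R (X →₀ R))
      = partialEnd fun x => (g x).bind f :=
  lhom_ext fun x c => by cases h : g x <;> simp [h]

theorem partialEnd_eq_sum {ι : Type*} (s : Finset ι) (f : ι → X → Option X) (g : X → Option X)
    (h : ∀ x, ∃ i ∈ s, f i x = g x ∧ ∀ j ∈ s, j ≠ i → f j x = none) :
    (partialEnd g : Module.End R (X →₀ R)) = ∑ i ∈ s, partialEnd (f i) := by
  refine lhom_ext fun x c => ?_
  obtain ⟨i, hi, hgi, hj⟩ := h x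
  rw [LinearMap.sum_apply, Finset.sum_eq_single_of_mem i hi fun j hjs hji => by simp [hj j hjs hji],
    partialEnd_single, partialEnd_single, hgi]

end Finsupp

noncomputable section

open Classical

namespace Leavitt

variable {G : LGraph}

theorem GPath.ext {p q : GPath G} (h₁ : p.first = q.first) (h₂ : p.edges = q.edges) : p = q := by
  cases p; cases q; cases h₁; cases h₂; rfl

def IsRegular (v : G.V) : Prop :=
  {e : G.Ed | G.src e = v}.Finite ∧ {e : G.Ed | G.src e = v}.Nonempty

def chosenEdge (v : G.V) : Option G.Ed :=
  if h : ∃ e, G.src e = v then some h.choose else none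

def IsSpecial (e : G.Ed) : Prop :=
  IsRegular (G.src e) ∧ chosenEdge (G.src e) = some e

theorem IsSpecial.eq_of_src_eq {e f : G.Ed} (he : IsSpecial e) (hf : IsSpecial f)
    (h : G.src e = G.src f) : e = f :=
  Option.some.inj (he.2.symm.trans (h ▸ hf.2))

theorem IsRegular.exists_isSpecial {v : G.V} (hv : IsRegular v) :
    ∃ e, G.src e = v ∧ IsSpecial e := by
  have h : ∃ e, G.src e = v := hv.2
  refine ⟨h.choose, h.choose_spec, ?_, ?_⟩
  · rwa [h.choose_spec]
  · rw [h.choose_spec, chosenEdge, dif_pos h]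

/-- A special edge `e` in front of the trivial path is absorbed: following `e` and then the special
edges from `r(e)` is following the special edges from `s(e)`. -/
def consNormal (e : G.Ed) (l : List G.Ed) : List G.Ed :=
  if l = [] ∧ IsSpecial e then [] else e :: l

def normalize (l : List G.Ed) : List G.Ed := l.foldr consNormal []

theorem chainOK_consNormal {e : G.Ed} {l : List G.Ed} (h : chainOK G (G.rng e) l) :
    chainOK G (G.src e) (consNormal e l) := by
  unfold consNormal
  split_ifs
  exacts [trivial, ⟨rfl, h⟩]

theorem not_isSpecial_getLast_consNormal {e : G.Ed} {l : List G.Ed}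
    (h : ∀ f ∈ l.getLast?, ¬ IsSpecial f) : ∀ f ∈ (consNormal e l).getLast?, ¬ IsSpecial f := by
  unfold consNormal
  split_ifs with hs
  · simp
  · rcases l with _ | ⟨g, m⟩
    · simpa using hs
    · simpa [List.getLast?_cons_cons] using h

theorem not_isSpecial_getLast_of_cons {f : G.Ed} {l : List G.Ed}
    (h : ∀ g ∈ (f :: l).getLast?, ¬ IsSpecial g) : ∀ g ∈ l.getLast?, ¬ IsSpecial g := by
  rcases l with _ | ⟨g, m⟩
  · simp
  · simpa [List.getLast?_cons_cons] using h

theorem consNormal_inj {e e' : G.Ed} {l l' : List G.Ed} (hs : G.src e = G.src e')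
    (h : consNormal e l = consNormal e' l') : e = e' ∧ l = l' := by
  unfold consNormal at h
  split_ifs at h with h1 h2 h2
  · exact ⟨h1.2.eq_of_src_eq h2.2 hs, h1.1.trans h2.1.symm⟩
  · exact ⟨(List.cons.inj h).1, (List.cons.inj h).2⟩

theorem eq_of_normalize_eq {u : G.V} {l l' : List G.Ed} (hc : chainOK G u l)
    (hc' : chainOK G u l') (hlen : l.length = l'.length) (h : normalize l = normalize l') :
    l = l' := by
  induction l generalizing u l' with
  | nil => exact (List.length_eq_zero_iff.1 hlen.symm).symm
  | cons e l ih =>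
    rcases l' with _ | ⟨e', l'⟩
    · simp at hlen
    · obtain ⟨rfl, hl⟩ := consNormal_inj (hc.1.trans hc'.1.symm) h
      rw [ih hc.2 hc'.2 (Nat.succ.inj hlen) hl]

/-- `⟨v, p, _, _, n⟩` stands for the boundary path that follows `p` from `v` and then the special
edges for as long as it meets regular vertices, placed in degree `n`. -/
@[ext]
structure NormalPath (G : LGraph) where
  first : G.V
  edges : List G.Ed
  chain : chainOK G first edges
  normal : ∀ e ∈ edges.getLast?, ¬ IsSpecial e
  deg : ℤ

namespace NormalPath

def vertAct (v : G.V) (x : NormalPath G) : Option (NormalPath G) :=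
  if x.first = v then some x else none

def edgeAct (e : G.Ed) (x : NormalPath G) : Option (NormalPath G) :=
  if h : G.rng e = x.first then
    some ⟨G.src e, consNormal e x.edges, chainOK_consNormal (h ▸ x.chain),
      not_isSpecial_getLast_consNormal x.normal, x.deg + 1⟩
  else none

def ghostAct (e : G.Ed) : NormalPath G → Option (NormalPath G)
  | ⟨_, f :: l, h, hn, n⟩ =>
    if f = e then some ⟨G.rng f, l, h.2, not_isSpecial_getLast_of_cons hn, n - 1⟩ else none
  | ⟨v, [], _, _, n⟩ =>
    if IsSpecial e ∧ G.src e = v then some ⟨G.rng e, [], trivial, by simp, n - 1⟩ else none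

theorem vertAct_bind_vertAct {v w : G.V} (h : v ≠ w) (x : NormalPath G) :
    (vertAct w x).bind (vertAct v) = none := by
  unfold vertAct; grind

theorem vertAct_bind_vertAct_self (v : G.V) (x : NormalPath G) :
    (vertAct v x).bind (vertAct v) = vertAct v x := by
  unfold vertAct; split_ifs <;> simp_all

theorem edgeAct_bind_ghostAct {e f : G.Ed} (h : e ≠ f) (x : NormalPath G) :
    (edgeAct f x).bind (ghostAct e) = none := by
  unfold edgeAct consNormal
  split_ifs with hr hs
  · simpa [ghostAct] using fun he hsrc => h (he.eq_of_src_eq hs.2 hsrc)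
  · simpa [ghostAct] using Ne.symm h
  · rfl

theorem edgeAct_bind_ghostAct_self (e : G.Ed) (x : NormalPath G) :
    (edgeAct e x).bind (ghostAct e) = vertAct (G.rng e) x := by
  unfold edgeAct consNormal vertAct
  split_ifs with hr hs h
  · simp [ghostAct, hs.2, hr, NormalPath.ext_iff, hs.1]
  · simp [ghostAct, hr]
  · exact absurd h.symm hr
  · rfl

theorem ghostAct_eq_some {e : G.Ed} {x y : NormalPath G} (h : ghostAct e x = some y) :
    x.first = G.src e ∧ y.first = G.rng e := by
  rcases x with ⟨v, _ | ⟨g, l⟩, hc, hn, n⟩ <;> simp only [ghostAct] at h <;>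
    split_ifs at h with hg <;> cases h
  · exact ⟨hg.2.symm, rfl⟩
  · subst hg; exact ⟨hc.1.symm, rfl⟩

theorem edgeAct_bind_vertAct_src (e : G.Ed) (x : NormalPath G) :
    (edgeAct e x).bind (vertAct (G.src e)) = edgeAct e x := by
  unfold edgeAct; split_ifs <;> simp [vertAct]

theorem vertAct_rng_bind_edgeAct (e : G.Ed) (x : NormalPath G) :
    (vertAct (G.rng e) x).bind (edgeAct e) = edgeAct e x := by
  unfold vertAct edgeAct; split_ifs <;> grind

theorem vertAct_src_bind_ghostAct (e : G.Ed) (x : NormalPath G) :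
    (vertAct (G.src e) x).bind (ghostAct e) = ghostAct e x := by
  unfold vertAct
  split_ifs with h
  · rfl
  · cases hx : ghostAct e x with
    | none => rfl
    | some y => exact absurd (ghostAct_eq_some hx).1 h

theorem ghostAct_bind_vertAct_rng (e : G.Ed) (x : NormalPath G) :
    (ghostAct e x).bind (vertAct (G.rng e)) = ghostAct e x := by
  cases hx : ghostAct e x with
  | none => rfl
  | some y => simp [vertAct, (ghostAct_eq_some hx).2]

theorem ghostAct_eq_none {e : G.Ed} {x : NormalPath G} (h : x.first ≠ G.src e) :
    ghostAct e x = none :=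
  Option.eq_none_iff_forall_ne_some.2 fun _ hx => h (ghostAct_eq_some hx).1

/-- The edge `e` is the first edge of `x`, or the special edge at `v` when `x` has no edges. -/
theorem exists_ghostAct_bind_edgeAct {v : G.V} (hv : IsRegular v) (x : NormalPath G) :
    ∃ e, G.src e = v ∧ (ghostAct e x).bind (edgeAct e) = vertAct v x ∧
      ∀ f, G.src f = v → f ≠ e → ghostAct f x = none := by
  by_cases hx : x.first = v
  · rcases x with ⟨u, _ | ⟨g, l⟩, hc, hn, n⟩ <;> dsimp only at hx <;> subst hx
    · obtain ⟨e, he, hs⟩ := hv.exists_isSpecial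
      refine ⟨e, he, ?_, fun f _ hfe => ?_⟩
      · simp [ghostAct, hs, he, edgeAct, consNormal, vertAct]
      · simp only [ghostAct]
        rw [if_neg]
        rintro ⟨hsf, hfu⟩
        exact hfe (hsf.eq_of_src_eq hs (hfu.trans he.symm))
    · have hcons : consNormal g l = g :: l := by
        unfold consNormal
        rw [if_neg]
        rintro ⟨rfl, hs⟩
        exact hn g rfl hs
      refine ⟨g, hc.1, ?_, fun f _ hfg => ?_⟩
      · simp [ghostAct, edgeAct, vertAct, hcons, hc.1]
      · simp [ghostAct, Ne.symm hfg]
  · obtain ⟨e, he⟩ := hv.2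
    refine ⟨e, he, ?_, fun f hf _ => ghostAct_eq_none (hf ▸ hx)⟩
    simp [ghostAct_eq_none (he ▸ hx : x.first ≠ G.src e), vertAct, hx]

def genAct : Gen G → NormalPath G → Option (NormalPath G)
  | .vert v => vertAct v
  | .edge e => edgeAct e
  | .ghost e => ghostAct e

variable (R : Type) [CommRing R]

def freeRep : MA R G →ₐ[R] Module.End R (NormalPath G →₀ R) :=
  MonoidAlgebra.lift R _ _ (FreeMonoid.lift fun g => Finsupp.partialEnd (genAct g))

theorem freeRep_gn (g : Gen G) : freeRep R (gn R g) = Finsupp.partialEnd (genAct g) := by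
  simp [freeRep, gn]

theorem freeRep_gn_mul (g h : Gen G) :
    freeRep R (gn R g * gn R h) = Finsupp.partialEnd fun x => (genAct h x).bind (genAct g) := by
  rw [map_mul, freeRep_gn, freeRep_gn, Finsupp.partialEnd_mul]

theorem freeRep_rel ⦃a b : MA R G⦄ (h : LRel R G a b) : freeRep R a = freeRep R b := by
  cases h with
  | vert_vert h =>
    rw [freeRep_gn_mul, map_zero, ← Finsupp.partialEnd_none]
    exact congrArg _ (funext (vertAct_bind_vertAct h))
  | vert_idem v =>
    rw [freeRep_gn_mul, freeRep_gn]
    exact congrArg _ (funext (vertAct_bind_vertAct_self v))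
  | ghost_edge h =>
    rw [freeRep_gn_mul, map_zero, ← Finsupp.partialEnd_none]
    exact congrArg _ (funext (edgeAct_bind_ghostAct h))
  | ghost_edge_self e =>
    rw [freeRep_gn_mul, freeRep_gn]
    exact congrArg _ (funext (edgeAct_bind_ghostAct_self e))
  | src_mul_edge e =>
    rw [freeRep_gn_mul, freeRep_gn]
    exact congrArg _ (funext (edgeAct_bind_vertAct_src e))
  | edge_mul_rng e =>
    rw [freeRep_gn_mul, freeRep_gn]
    exact congrArg _ (funext (vertAct_rng_bind_edgeAct e))
  | ghost_mul_src e =>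
    rw [freeRep_gn_mul, freeRep_gn]
    exact congrArg _ (funext (vertAct_src_bind_ghostAct e))
  | rng_mul_ghost e =>
    rw [freeRep_gn_mul, freeRep_gn]
    exact congrArg _ (funext (ghostAct_bind_vertAct_rng e))
  | ck v hfin hne =>
    simp only [freeRep_gn, map_sum, freeRep_gn_mul]
    refine Finsupp.partialEnd_eq_sum _ _ _ fun x => ?_
    obtain ⟨e, he, hx, hne⟩ := exists_ghostAct_bind_edgeAct ⟨hfin, hne⟩ x
    refine ⟨e, hfin.mem_toFinset.2 he, hx, fun f hf hfe => ?_⟩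
    simp [genAct, hne f (hfin.mem_toFinset.1 hf) hfe]
  | unit hfin =>
    rw [map_one, map_sum, ← Finsupp.partialEnd_some]
    simp only [freeRep_gn]
    refine Finsupp.partialEnd_eq_sum _ _ _ fun x => ⟨x.first, hfin.mem_toFinset.2 trivial, ?_, ?_⟩
    · simp [genAct, vertAct]
    · intro w _ hw
      simp [genAct, vertAct, Ne.symm hw]

def rep : LPA R G →ₐ[R] Module.End R (NormalPath G →₀ R) :=
  RingQuot.liftAlgHom R ⟨freeRep R, freeRep_rel R⟩

theorem rep_mk (a : MA R G) : rep R (Leavitt.mk R G a) = freeRep R a := by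
  rw [Leavitt.mk, ← RingQuot.mkAlgHom_coe R (LRel R G)]
  exact RingQuot.liftAlgHom_mkAlgHom_apply _ _ _ _

variable {R}

def edgesAct : List G.Ed → NormalPath G → Option (NormalPath G)
  | [] => some
  | e :: l => fun x => (edgesAct l x).bind (edgeAct e)

def pathAct (p : GPath G) (x : NormalPath G) : Option (NormalPath G) :=
  (edgesAct p.edges x).bind (vertAct p.first)

theorem prod_map_partialEnd_edgeAct (l : List G.Ed) :
    (l.map fun e => (Finsupp.partialEnd (edgeAct e) : Module.End R (NormalPath G →₀ R))).prod
      = Finsupp.partialEnd (edgesAct l) := by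
  induction l with
  | nil => exact Finsupp.partialEnd_some.symm
  | cons e l ih => rw [List.map_cons, List.prod_cons, ih, Finsupp.partialEnd_mul]; rfl

theorem rep_pathElem (p : GPath G) :
    rep R (pathElem R p) = Finsupp.partialEnd (pathAct p) := by
  rw [pathElem, rep_mk, freeRep, MonoidAlgebra.lift_single, one_smul, FreeMonoid.lift_apply,
    GPath.word, FreeMonoid.toList_ofList, List.map_cons, List.prod_cons, List.map_map]
  exact (congrArg _ (prod_map_partialEnd_edgeAct p.edges)).trans (Finsupp.partialEnd_mul _ _)

def ofVertex (v : G.V) : NormalPath G := ⟨v, [], trivial, by simp, 0⟩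

theorem edgeAct_eq_some {e : G.Ed} {x y : NormalPath G} (h : edgeAct e x = some y) :
    y.first = G.src e ∧ y.edges = consNormal e x.edges ∧ y.deg = x.deg + 1 := by
  unfold edgeAct at h
  split_ifs at h
  cases h
  exact ⟨rfl, rfl, rfl⟩

theorem edgesAct_eq_some {l : List G.Ed} {x y : NormalPath G} (h : edgesAct l x = some y) :
    y.edges = l.foldr consNormal x.edges ∧ y.deg = x.deg + l.length := by
  induction l generalizing y with
  | nil => cases h; simp
  | cons e l ih =>
    obtain ⟨z, hz, hzy⟩ := Option.bind_eq_some_iff.1 h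
    obtain ⟨hze, hzd⟩ := ih hz
    obtain ⟨-, hye, hyd⟩ := edgeAct_eq_some hzy
    refine ⟨by rw [hye, hze]; rfl, ?_⟩
    rw [hyd, hzd, List.length_cons]
    push_cast
    ring

theorem edgesAct_ofVertex_pathEnd {u : G.V} {l : List G.Ed} (hc : chainOK G u l) :
    ∃ y, edgesAct l (ofVertex (pathEnd G u l)) = some y ∧ y.first = u := by
  induction l generalizing u with
  | nil => exact ⟨_, rfl, rfl⟩
  | cons e l ih =>
    obtain ⟨y, hy, hyf⟩ := ih hc.2
    cases hz : edgeAct e y with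
    | none => simp [edgeAct, hyf] at hz
    | some z => exact ⟨z, by simp [edgesAct, pathEnd, hy, hz], (edgeAct_eq_some hz).1.trans hc.1⟩

theorem pathAct_eq_some {p : GPath G} {x y : NormalPath G} (h : pathAct p x = some y) :
    y.first = p.first ∧ edgesAct p.edges x = some y := by
  obtain ⟨z, hz, hzy⟩ := Option.bind_eq_some_iff.1 h
  unfold vertAct at hzy
  split_ifs at hzy with hzf
  cases hzy
  exact ⟨hzf, hz⟩

theorem exists_pathAct_ofVertex (p : GPath G) : ∃ y, pathAct p (ofVertex p.last) = some y := by
  obtain ⟨y, hy, hyf⟩ := edgesAct_ofVertex_pathEnd p.ok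
  exact ⟨y, by simp [pathAct, GPath.last, hy, vertAct, hyf]⟩

/-- The special edges collapsed by `normalize` are recovered from the degree. -/
theorem eq_of_pathAct_ofVertex_eq {p q : GPath G} {v : G.V} {y : NormalPath G}
    (hp : pathAct p (ofVertex v) = some y) (hq : pathAct q (ofVertex v) = some y) : p = q := by
  obtain ⟨hpf, hpe⟩ := pathAct_eq_some hp
  obtain ⟨hqf, hqe⟩ := pathAct_eq_some hq
  obtain ⟨hpe, hpd⟩ := edgesAct_eq_some hpe
  obtain ⟨hqe, hqd⟩ := edgesAct_eq_some hqe
  have hfirst : p.first = q.first := hpf.symm.trans hqf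
  refine GPath.ext hfirst (eq_of_normalize_eq p.ok (hfirst ▸ q.ok) ?_ (hpe.symm.trans hqe))
  simpa [ofVertex] using hpd.symm.trans hqd

theorem exists_linearMap_pathElem (a : GPath G) :
    ∃ φ : LPA R G →ₗ[R] R, φ (pathElem R a) = 1 ∧ ∀ b, b ≠ a → φ (pathElem R b) = 0 := by
  obtain ⟨y, hy⟩ := exists_pathAct_ofVertex a
  refine ⟨Finsupp.lapply y ∘ₗ LinearMap.applyₗ (Finsupp.single (ofVertex a.last) 1) ∘ₗ
    (rep R).toLinearMap, by simp [rep_pathElem, hy], fun b hb => ?_⟩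
  cases hb' : pathAct b (ofVertex a.last) with
  | none => simp [rep_pathElem, hb']
  | some z =>
    have hzy : z ≠ y := by
      rintro rfl
      exact hb (eq_of_pathAct_ofVertex_eq hb' hy)
    simp [rep_pathElem, hb', Finsupp.single_eq_of_ne hzy.symm]

end NormalPath

theorem HasEUP.two_mul_ne_one {R : Subring ℂ} (hR : HasEUP R) (c : R) : 2 * c ≠ 1 := by
  intro hc
  have hc' : (c : ℂ) = 1 / 2 := by
    have h2 : 2 * (c : ℂ) = 1 := congrArg ((↑) : R → ℂ) hc
    linear_combination h2 / 2
  obtain ⟨j, hj⟩ := hR 4 (fun _ => c) (by simp [hc', map_ofNat]; norm_num)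
  have h0 : c = 0 := hj (if j = 0 then 1 else 0) (by split_ifs with h <;> simp [h, eq_comm])
  simp [h0] at hc

end Leavitt

end

open Leavitt in
theorem path_eq_of_two_mul_eq_add_general
    (E : LGraph) (R : Subring ℂ)
    (hEUP : HasEUP R) (x : LPA ↥R E) (lam : ↥R) (a b : GPath E)
    (h : 2 * x = pathElem ↥R a + lam • pathElem ↥R b) : a = b := by
  by_contra hab
  obtain ⟨φ, hφa, hφb⟩ := NormalPath.exists_linearMap_pathElem (R := ↥R) a
  apply hEUP.two_mul_ne_one (φ x)
  have := congrArg φ h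
  rwa [two_mul, map_add, map_add, map_smul, hφa, hφb b (Ne.symm hab), smul_zero, add_zero,
    ← two_mul] at this

open Leavitt in
/-- If `2x = α + λβ` in `L_R(E)` for paths `α, β` and `λ ∈ R`, where
`R ⊆ ℂ` is closed under conjugation and has an essentially unique partition of the unit,
then `α = β`. -/
theorem path_eq_of_two_mul_eq_add
    (E : LGraph) (R : Subring ℂ) (hR : ∀ z ∈ R, (starRingEnd ℂ) z ∈ R)
    (hEUP : HasEUP R) (x : LPA ↥R E) (lam : ↥R) (a b : GPath E)
    (h : 2 * x = pathElem ↥R a + lam • pathElem ↥R b) : a = b :=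
  path_eq_of_two_mul_eq_add_general E R hEUP x lam a b h
end

section
/- Let R be a unital subring of ℂ closed under complex conjugation that has an essentially unique partition of the unit. Then for every natural number n ≥ 2, the complex number 1/n does not belong to R. Consequently, no subfield of ℂ that is closed under complex conjugation has an essentially unique partition of the unit. -/
open MulOpposite

/-! If `x ∈ R`, then `m` copies of `x` satisfy `∑ x x̄ = m |x|²`. For `x = 1/n` and `m = n²`
this is a partition of the unit by `n² ≥ 2` nonzero elements, which an essentially unique
partition of the unit forbids. A subfield contains `1/2`. -/

open ComplexConjugate

theorem Leavitt.HasEUP.natCast_mul_mul_conj_ne_one {R : Subring ℂ} (hEUP : HasEUP R)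
    {x : ℂ} (hx : x ∈ R) {m : ℕ} (hm : 2 ≤ m) : (m : ℂ) * (x * conj x) ≠ 1 := by
  intro hsum
  obtain ⟨j, hj⟩ := hEUP m (fun _ => ⟨x, hx⟩) (by simpa using hsum)
  have : Nontrivial (Fin m) := Fin.nontrivial_iff_two_le.mpr hm
  obtain ⟨i, hi⟩ := exists_ne j
  have hx0 : x = 0 := congrArg Subtype.val (hj i hi)
  simp [hx0] at hsum

theorem Leavitt.HasEUP.inv_natCast_not_mem {R : Subring ℂ} (hEUP : HasEUP R)
    {n : ℕ} (hn : 2 ≤ n) : (n : ℂ)⁻¹ ∉ R := fun hmem =>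
  have hn0 : (n : ℂ) ≠ 0 := Nat.cast_ne_zero.mpr (by omega)
  hEUP.natCast_mul_mul_conj_ne_one hmem (m := n * n) (by nlinarith) (by
    rw [map_inv₀, Complex.conj_natCast]
    push_cast
    field_simp)

open Leavitt in
theorem inv_nat_not_mem_and_no_subfield_hasEUP_general
    (R : Subring ℂ) (hEUP : HasEUP R) :
    (∀ n : ℕ, 2 ≤ n → ((n : ℂ))⁻¹ ∉ R) ∧
    (∀ K : Subfield ℂ, (∀ z ∈ K, (starRingEnd ℂ) z ∈ K) → ¬ HasEUP K.toSubring) :=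
  ⟨fun _ hn => hEUP.inv_natCast_not_mem hn,
    fun K _ hK => hK.inv_natCast_not_mem le_rfl (K.inv_mem (natCast_mem K 2))⟩

open Leavitt in
/-- If `R ⊆ ℂ` is closed under conjugation and has an essentially
unique partition of the unit, then `1/n ∉ R` for every `n ≥ 2`; consequently no subfield
of `ℂ` closed under conjugation has an essentially unique partition of the unit. -/
theorem inv_nat_not_mem_and_no_subfield_hasEUP
    (R : Subring ℂ) (hR : ∀ z ∈ R, (starRingEnd ℂ) z ∈ R) (hEUP : HasEUP R) :
    (∀ n : ℕ, 2 ≤ n → ((n : ℂ))⁻¹ ∉ R) ∧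
    (∀ K : Subfield ℂ, (∀ z ∈ K, (starRingEnd ℂ) z ∈ K) → ¬ HasEUP K.toSubring) :=
  inv_nat_not_mem_and_no_subfield_hasEUP_general R hEUP
end

section
/- In the Leavitt path algebra L_ℂ(E₂) with generators the two loops a, b (and the single vertex giving the unit 1), the element p = (1/2)(aa* + ab* + ba* + bb*) is a projection (p = p² = p*) that does not belong to the diagonal D(L_ℂ(E₂)), i.e. p is not in the ℂ-linear span of {αα* : α ∈ E₂*}. -/
open MulOpposite

/-!
Put `s = a + b`. The Cuntz–Krieger relations give `s* s = 2`, so `p = ½ s s*` is a self-adjoint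
idempotent. To separate `p` from the diagonal, represent `L_R(E₂)` on `ℕ →₀ R` with `a` and `b`
acting as `n ↦ 2n` and `n ↦ 2n + 1`. There `αα*` is the projection onto the basis vectors whose
binary expansion ends in `α`, so it is diagonal in the basis, while `p` sends the basis vector `0`
to `½(e₀ + e₁)`: the `(1, 0)` matrix coefficient vanishes on the diagonal but not at `p`.
-/

lemma isIdempotentElem_mul_of_mul_eq_one {M : Type*} [Monoid M] {s t : M} (h : t * s = 1) :
    IsIdempotentElem (s * t) := by
  rw [IsIdempotentElem, mul_assoc, ← mul_assoc t, h, one_mul]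

namespace Leavitt

section Relations

variable {R : Type} [CommRing R] {G : LGraph}

lemma mk_eq_mk_of_rel {x y : MA R G} (h : LRel R G x y) : mk R G x = mk R G y :=
  RingQuot.mkRingHom_rel h

lemma ghostElem_mul_edgeElem [DecidableEq G.Ed] (e f : G.Ed) :
    ghostElem R G e * edgeElem R G f = if e = f then vertexElem R G (G.rng e) else 0 := by
  split_ifs with h
  · subst h
    exact (map_mul _ _ _).symm.trans (mk_eq_mk_of_rel (LRel.ghost_edge_self e))
  · exact (map_mul _ _ _).symm.trans ((mk_eq_mk_of_rel (LRel.ghost_edge h)).trans (map_zero _))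

lemma sum_vertexElem [Fintype G.V] : ∑ v, vertexElem R G v = 1 := by
  have h := mk_eq_mk_of_rel (R := R) (LRel.unit (G := G) Set.finite_univ)
  rw [map_one, map_sum, Set.Finite.toFinset_univ] at h
  exact h.symm

lemma mk_algebraMap (c : R) : mk R G (algebraMap R (MA R G) c) = algebraMap R (LPA R G) c := by
  rw [mk, ← RingQuot.mkAlgHom_coe R]
  exact (RingQuot.mkAlgHom R (LRel R G)).commutes c

end Relations

section Star

variable {R : Type} [CommRing R] {G : LGraph} (σ : R →+* R)

noncomputable def lstarHom : LPA R G →+* (LPA R G)ᵐᵒᵖ :=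
  RingQuot.lift ⟨starPre R G σ, starPre_rel R G σ⟩

lemma lstar_eq_unop_lstarHom (x : LPA R G) : lstar R G σ x = unop (lstarHom σ x) := rfl

lemma lstar_add (x y : LPA R G) : lstar R G σ (x + y) = lstar R G σ x + lstar R G σ y := by
  simp only [lstar_eq_unop_lstarHom, map_add, unop_add]

lemma lstar_mul (x y : LPA R G) : lstar R G σ (x * y) = lstar R G σ y * lstar R G σ x := by
  simp only [lstar_eq_unop_lstarHom, map_mul, unop_mul]

lemma lstar_mk (x : MA R G) : lstar R G σ (mk R G x) = unop (starPre R G σ x) :=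
  congrArg unop (RingQuot.lift_mkRingHom_apply _ _ x)

lemma lstar_algebraMap (c : R) :
    lstar R G σ (algebraMap R (LPA R G) c) = algebraMap R (LPA R G) (σ c) := by
  rw [← mk_algebraMap, lstar_mk, MonoidAlgebra.coe_algebraMap, Function.comp_apply,
    starPre_single, map_one, mul_one]
  rfl

lemma lstar_smul (c : R) (x : LPA R G) : lstar R G σ (c • x) = σ c • lstar R G σ x := by
  rw [Algebra.smul_def, lstar_mul, lstar_algebraMap, ← Algebra.commutes, ← Algebra.smul_def]

lemma lstar_edgeElem (e : G.Ed) : lstar R G σ (edgeElem R G e) = ghostElem R G e := by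
  rw [edgeElem, lstar_mk, starPre_gn, unop_op, starGen_edge, ghostElem]

lemma lstar_ghostElem (e : G.Ed) : lstar R G σ (ghostElem R G e) = edgeElem R G e := by
  rw [ghostElem, lstar_mk, starPre_gn, unop_op, starGen_ghost, edgeElem]

end Star

namespace E2

instance : Unique E2.V := inferInstanceAs (Unique PUnit)

instance : DecidableEq E2.Ed := inferInstanceAs (DecidableEq Bool)

instance : Fintype E2.Ed := inferInstanceAs (Fintype Bool)

variable {R : Type} [CommRing R]

lemma vertexElem_eq_one (v : E2.V) : vertexElem R E2 v = 1 := by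
  rw [← sum_vertexElem (R := R) (G := E2), Fintype.sum_unique, Subsingleton.elim v default]

/- `E2.Ed` is only semireducibly `Bool`, so the general lemmas do not rewrite at the edges
`false` and `true`; the following restate them with `Bool` edges. -/

lemma ghostElem_mul_edgeElem (e f : Bool) :
    ghostElem R E2 e * edgeElem R E2 f = if e = f then 1 else 0 := by
  have h := Leavitt.ghostElem_mul_edgeElem (R := R) (G := E2) e f
  rwa [vertexElem_eq_one] at h

lemma lstar_edgeElem (σ : R →+* R) (e : Bool) :
    lstar R E2 σ (edgeElem R E2 e) = ghostElem R E2 e :=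
  Leavitt.lstar_edgeElem (G := E2) σ e

lemma lstar_ghostElem (σ : R →+* R) (e : Bool) :
    lstar R E2 σ (ghostElem R E2 e) = edgeElem R E2 e :=
  Leavitt.lstar_ghostElem (G := E2) σ e

section Cuntz

open Finsupp

noncomputable def shift (e : Bool) : Module.End R (ℕ →₀ R) :=
  lmapDomain R R fun n => 2 * n + e.toNat

noncomputable def unshift (e : Bool) : Module.End R (ℕ →₀ R) :=
  lsum R fun n => if n % 2 = e.toNat then lsingle (n / 2) else 0

@[simp] lemma shift_single (e : Bool) (n : ℕ) (c : R) :
    shift e (single n c) = single (2 * n + e.toNat) c := by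
  simp [shift, lmapDomain_apply, mapDomain_single]

@[simp] lemma unshift_single (e : Bool) (n : ℕ) (c : R) :
    unshift e (single n c) = if n % 2 = e.toNat then single (n / 2) c else 0 := by
  simp only [unshift, lsum_single]
  split_ifs <;> simp

lemma unshift_mul_shift (e f : Bool) :
    unshift e * shift f = if e = f then (1 : Module.End R (ℕ →₀ R)) else 0 := by
  refine lhom_ext fun n c => ?_
  cases e <;> cases f <;> simp [Module.End.mul_apply, Nat.mul_add_div]

lemma sum_shift_mul_unshift : ∑ e, shift e * unshift e = (1 : Module.End R (ℕ →₀ R)) := by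
  refine lhom_ext fun n c => ?_
  rw [Fintype.sum_bool, add_comm]
  rcases Nat.mod_two_eq_zero_or_one n with h | h <;>
    · simp [Module.End.mul_apply, h]
      congr 1
      omega

noncomputable def cuntzGen : Gen E2 → Module.End R (ℕ →₀ R)
  | .vert _ => 1
  | .edge e => shift e
  | .ghost e => unshift e

noncomputable def cuntzFree : MA R E2 →ₐ[R] Module.End R (ℕ →₀ R) :=
  MonoidAlgebra.lift R (Module.End R (ℕ →₀ R)) (Wd E2) (FreeMonoid.lift cuntzGen)

lemma cuntzFree_single_one (w : Wd E2) :
    cuntzFree (MonoidAlgebra.single w (1 : R)) = FreeMonoid.lift cuntzGen w := by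
  rw [cuntzFree, MonoidAlgebra.lift_single, one_smul]

lemma cuntzFree_gn (g : Gen E2) : cuntzFree (gn R g) = cuntzGen g := by
  rw [gn, cuntzFree_single_one, FreeMonoid.lift_eval_of]

lemma cuntzFree_rel ⦃x y : MA R E2⦄ (h : LRel R E2 x y) : cuntzFree x = cuntzFree y := by
  cases h with
  | vert_vert h => exact absurd (Subsingleton.elim _ _) h
  | vert_idem v => simp only [map_mul, cuntzFree_gn, cuntzGen, mul_one]
  | ghost_edge h =>
      rw [map_mul, cuntzFree_gn, cuntzFree_gn, map_zero]
      exact (unshift_mul_shift _ _).trans (if_neg h)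
  | ghost_edge_self e =>
      rw [map_mul, cuntzFree_gn, cuntzFree_gn, cuntzFree_gn]
      exact (unshift_mul_shift _ _).trans (if_pos rfl)
  | src_mul_edge e => simp only [map_mul, cuntzFree_gn, cuntzGen, one_mul]
  | edge_mul_rng e => simp only [map_mul, cuntzFree_gn, cuntzGen, mul_one]
  | ghost_mul_src e => simp only [map_mul, cuntzFree_gn, cuntzGen, mul_one]
  | rng_mul_ghost e => simp only [map_mul, cuntzFree_gn, cuntzGen, one_mul]
  | ck v hfin hne =>
      have huniv : hfin.toFinset = Finset.univ :=
        Finset.eq_univ_of_forall fun e => by simp [Subsingleton.elim (E2.src e) v]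
      rw [huniv, map_sum, cuntzFree_gn]
      simp only [map_mul, cuntzFree_gn, cuntzGen]
      exact sum_shift_mul_unshift.symm
  | unit hfin =>
      simp only [map_one, map_sum, cuntzFree_gn, cuntzGen, Set.Finite.toFinset_univ,
        Finset.sum_const, Finset.card_univ, Fintype.card_unique, one_smul]

noncomputable def cuntzRep : LPA R E2 →ₐ[R] Module.End R (ℕ →₀ R) :=
  RingQuot.liftAlgHom R ⟨cuntzFree, cuntzFree_rel⟩

lemma cuntzRep_mk (x : MA R E2) : cuntzRep (mk R E2 x) = cuntzFree x := by
  rw [mk, ← RingQuot.mkAlgHom_coe R, RingHom.coe_coe]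
  exact RingQuot.liftAlgHom_mkAlgHom_apply R cuntzFree cuntzFree_rel x

@[simp] lemma cuntzRep_edgeElem (e : Bool) : cuntzRep (edgeElem R E2 e) = shift e :=
  (cuntzRep_mk _).trans (cuntzFree_gn _)

@[simp] lemma cuntzRep_ghostElem (e : Bool) : cuntzRep (ghostElem R E2 e) = unshift e :=
  (cuntzRep_mk _).trans (cuntzFree_gn _)

lemma cuntzRep_pathElem (q : GPath E2) :
    cuntzRep (pathElem R q) = (q.edges.map shift).prod := by
  rw [pathElem, cuntzRep_mk, cuntzFree_single_one, GPath.word, FreeMonoid.lift_ofList]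
  simp only [List.map_cons, cuntzGen, List.map_map, Function.comp_def, List.prod_cons, one_mul]
  rfl

lemma cuntzRep_pathElemStar (q : GPath E2) :
    cuntzRep (pathElemStar R q) = (q.edges.map unshift).reverse.prod := by
  rw [pathElemStar, cuntzRep_mk, cuntzFree_single_one, wordStar, GPath.word,
    FreeMonoid.toList_ofList, FreeMonoid.lift_ofList]
  simp only [List.map_cons, starGen_vert, List.map_map, Function.comp_def, starGen_edge,
    List.reverse_cons, List.map_append, List.map_reverse, cuntzGen, List.map_nil,
    List.prod_append, List.prod_cons, List.prod_nil, mul_one]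
  rfl

lemma exists_shifts_mul_unshifts_single (l : List Bool) (n : ℕ) :
    ∃ c : R, ((l.map shift).prod * (l.map unshift).reverse.prod : Module.End R (ℕ →₀ R))
      (single n 1) = single n c := by
  induction l generalizing n with
  | nil => exact ⟨1, by simp⟩
  | cons e l ih =>
    simp only [List.map_cons, List.prod_cons, List.reverse_cons, List.prod_append,
      List.prod_nil, mul_one, Module.End.mul_apply, unshift_single]
    by_cases h : n % 2 = e.toNat
    · obtain ⟨c, hc⟩ := ih (n / 2)
      rw [Module.End.mul_apply] at hc
      refine ⟨c, ?_⟩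
      rw [if_pos h, hc, shift_single, ← h, Nat.div_add_mod]
    · exact ⟨0, by simp [h]⟩

noncomputable def cuntzCoeff (m n : ℕ) : LPA R E2 →ₗ[R] R :=
  lapply m ∘ₗ LinearMap.applyₗ (single n 1) ∘ₗ cuntzRep.toLinearMap

lemma cuntzCoeff_apply (m n : ℕ) (x : LPA R E2) :
    cuntzCoeff m n x = cuntzRep x (single n 1) m := rfl

lemma diagonal_le_ker_cuntzCoeff {m n : ℕ} (h : m ≠ n) :
    diagonal R E2 ≤ LinearMap.ker (cuntzCoeff m n) := by
  rw [diagonal, Submodule.span_le]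
  rintro _ ⟨q, rfl⟩
  obtain ⟨c, hc⟩ := exists_shifts_mul_unshifts_single (R := R) q.edges n
  rw [SetLike.mem_coe, LinearMap.mem_ker, cuntzCoeff_apply, map_mul, cuntzRep_pathElem,
    cuntzRep_pathElemStar, hc, single_eq_of_ne h]

end Cuntz

end E2

end Leavitt

open Leavitt in
/-- In `L_ℂ(E₂)` the element `p = ½(aa* + ab* + ba* + bb*)` is a
projection that does not belong to the diagonal. -/
theorem nondiagonal_projection_in_L2C :
    ∀ p : LPA ℂ E2,
      p = (2⁻¹ : ℂ) • (edgeElem ℂ E2 false * ghostElem ℂ E2 false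
            + edgeElem ℂ E2 false * ghostElem ℂ E2 true
            + edgeElem ℂ E2 true * ghostElem ℂ E2 false
            + edgeElem ℂ E2 true * ghostElem ℂ E2 true) →
      p * p = p ∧ lstar ℂ E2 (starRingEnd ℂ) p = p ∧ p ∉ diagonal ℂ E2 := by
  intro p hp
  set s : LPA ℂ E2 := edgeElem ℂ E2 false + edgeElem ℂ E2 true
  set t : LPA ℂ E2 := ghostElem ℂ E2 false + ghostElem ℂ E2 true
  replace hp : p = ((2⁻¹ : ℂ) • s) * t := by
    rw [hp, smul_mul_assoc]
    congr 1
    simp only [s, t, add_mul, mul_add]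
    abel
  subst hp
  have hst : lstar ℂ E2 (starRingEnd ℂ) s = t := by
    rw [lstar_add, E2.lstar_edgeElem, E2.lstar_edgeElem]
  have hts : lstar ℂ E2 (starRingEnd ℂ) t = s := by
    rw [lstar_add, E2.lstar_ghostElem, E2.lstar_ghostElem]
  have ht_mul_s : t * s = (2 : ℂ) • 1 := by
    simp only [s, t, add_mul, mul_add, E2.ghostElem_mul_edgeElem]
    simp [two_smul]
  have hunit : t * ((2⁻¹ : ℂ) • s) = 1 := by
    rw [mul_smul_comm, ht_mul_s, smul_smul, inv_mul_cancel₀ two_ne_zero, one_smul]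
  have hcoeff : E2.cuntzCoeff 1 0 (((2⁻¹ : ℂ) • s) * t) = 2⁻¹ := by
    simp [E2.cuntzCoeff_apply, s, t]
  refine ⟨isIdempotentElem_mul_of_mul_eq_one hunit, ?_, fun hmem => ?_⟩
  · rw [lstar_mul, lstar_smul, hts, hst, smul_mul_assoc, mul_smul_comm, map_inv₀, map_ofNat]
  · have := E2.diagonal_le_ker_cuntzCoeff one_ne_zero hmem
    rw [LinearMap.mem_ker, hcoeff] at this
    norm_num at this
end
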